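/- Write p_δ(x) = Σ_i a_{δ,i} x^i, so a_{δ,t} = ((−4)^t / 2^δ) Σ_k C(δ,2k)C(k,t). Then for suitable r = δ and all t ≥ 1: (t/(r+1))·a_{r,t} = (t/r)·a_{r−1,t} − ((t−1)/(r−1))·a_{r−2,t−1}. -/
import Mathlib

/-- `a r t` is the coefficient of `x^t` in `p_r(x)`:
`a_{r,t} = ((−4)^t / 2^r) Σ_k C(r+1,2k) C(k,t)`. -/
noncomputable def coeffA (r t : ℕ) : ℝ :=
  ((-4 : ℝ) ^ t / 2 ^ r) *
    ∑ k ∈ Finset.range (r + 2), ((r + 1).choose (2 * k) * k.choose t : ℝ)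

def Ssum (n t : ℕ) : ℕ := ∑ k ∈ Finset.range (n+1), n.choose (2*k) * k.choose t
def Tsum (n t : ℕ) : ℕ := ∑ k ∈ Finset.range (n+1), n.choose (2*k+1) * k.choose t

lemma lemA (n t : ℕ) : Tsum (n+1) t = Ssum n t + Tsum n t := by
  unfold Tsum Ssum
  have hs : ∀ k : ℕ, (n+1).choose (2*k+1) = n.choose (2*k) + n.choose (2*k+1) :=
    fun k => Nat.choose_succ_succ' n (2*k)
  calc ∑ k ∈ Finset.range (n+2), (n+1).choose (2*k+1) * k.choose t
      = ∑ k ∈ Finset.range (n+2),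
          (n.choose (2*k) * k.choose t + n.choose (2*k+1) * k.choose t) := by
        refine Finset.sum_congr rfl fun k _ => ?_; rw [hs k, add_mul]
    _ = (∑ k ∈ Finset.range (n+2), n.choose (2*k) * k.choose t)
        + ∑ k ∈ Finset.range (n+2), n.choose (2*k+1) * k.choose t :=
        Finset.sum_add_distrib
    _ = (∑ k ∈ Finset.range (n+1), n.choose (2*k) * k.choose t)
        + ∑ k ∈ Finset.range (n+1), n.choose (2*k+1) * k.choose t := by
        rw [Finset.sum_range_succ (fun k => n.choose (2*k) * k.choose t),
          Finset.sum_range_succ (fun k => n.choose (2*k+1) * k.choose t),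
          Nat.choose_eq_zero_of_lt (show n < 2*(n+1) by omega),
          Nat.choose_eq_zero_of_lt (show n < 2*(n+1)+1 by omega)]
        simp

lemma evens_split (n t : ℕ) :
    Ssum (n+1) t = (∑ j ∈ Finset.range (n+1),
      (n.choose (2*j+1) + n.choose (2*j+2)) * (j+1).choose t) + (0:ℕ).choose t := by
  unfold Ssum
  rw [Finset.sum_range_succ' (fun k => (n+1).choose (2*k) * k.choose t)]
  have hs : ∀ j : ℕ, (n+1).choose (2*(j+1)) = n.choose (2*j+1) + n.choose (2*j+2) :=
    fun j => Nat.choose_succ_succ' n (2*j+1)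
  rw [Finset.sum_congr rfl (fun j _ => by rw [hs j] :
    ∀ j ∈ Finset.range (n+1), (n+1).choose (2*(j+1)) * (j+1).choose t
      = (n.choose (2*j+1) + n.choose (2*j+2)) * (j+1).choose t)]
  simp

lemma evens_tail (n t : ℕ) :
    (∑ j ∈ Finset.range (n+1), n.choose (2*j+2) * (j+1).choose t)
      = Ssum n t - (0:ℕ).choose t := by
  unfold Ssum
  rw [Finset.sum_range_succ (fun j => n.choose (2*j+2) * (j+1).choose t),
    Nat.choose_eq_zero_of_lt (show n < 2*n+2 by omega),
    Finset.sum_range_succ' (fun k => n.choose (2*k) * k.choose t)]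
  have : ∀ j : ℕ, n.choose (2*(j+1)) = n.choose (2*j+2) := fun j => by
    rw [Nat.mul_succ]
  simp [this]

lemma lemB (n s : ℕ) : Ssum (n+1) (s+1) = Ssum n (s+1) + Tsum n (s+1) + Tsum n s := by
  have h0 : (0:ℕ).choose (s+1) = 0 := Nat.choose_eq_zero_of_lt (Nat.succ_pos s)
  rw [evens_split n (s+1), h0, add_zero]
  have hc : ∀ j : ℕ, (j+1).choose (s+1) = j.choose s + j.choose (s+1) :=
    fun j => Nat.choose_succ_succ' j s
  have expand : ∀ j ∈ Finset.range (n+1),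
      (n.choose (2*j+1) + n.choose (2*j+2)) * (j+1).choose (s+1)
      = n.choose (2*j+1) * j.choose (s+1) + n.choose (2*j+1) * j.choose s
        + n.choose (2*j+2) * (j+1).choose (s+1) := by
    intro j _
    rw [add_mul]
    congr 1
    rw [hc j, mul_add, add_comm (n.choose (2*j+1) * j.choose s)]
  rw [Finset.sum_congr rfl expand, Finset.sum_add_distrib, Finset.sum_add_distrib,
    evens_tail n (s+1), h0, Nat.sub_zero]
  unfold Tsum
  ring

lemma lemC (n : ℕ) : Ssum (n+1) 0 = Tsum n 0 + Ssum n 0 := by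
  rw [evens_split n 0]
  have expand : ∀ j ∈ Finset.range (n+1),
      (n.choose (2*j+1) + n.choose (2*j+2)) * (j+1).choose 0
      = n.choose (2*j+1) * j.choose 0 + n.choose (2*j+2) * (j+1).choose 0 := by
    intro j _; simp [add_mul]
  rw [Finset.sum_congr rfl expand, Finset.sum_add_distrib, evens_tail n 0]
  unfold Ssum Tsum
  have hpos : 1 ≤ ∑ k ∈ Finset.range (n+1), n.choose (2*k) * k.choose 0 := by
    rw [Finset.sum_range_succ' (fun k => n.choose (2*k) * k.choose 0)]
    simp
  simp only [Nat.choose_zero_right, mul_one] at hpos ⊢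
  omega

lemma lemE (m s : ℕ) : 2 * (s+1) * Ssum (m+1) (s+1) = (m+1) * Tsum m s := by
  unfold Ssum Tsum
  rw [Finset.mul_sum, Finset.mul_sum,
    Finset.sum_range_succ' (fun k => 2*(s+1) * ((m+1).choose (2*k) * k.choose (s+1)))]
  have e1 : ∀ j : ℕ, 2*(s+1) * ((m+1).choose (2*(j+1)) * (j+1).choose (s+1))
      = (m+1) * (m.choose (2*j+1) * j.choose s) := by
    intro j
    have h1 : (m+1) * m.choose (2*j+1) = (m+1).choose (2*(j+1)) * (2*j+2) :=
      Nat.add_one_mul_choose_eq m (2*j+1)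
    have h2 : (j+1) * j.choose s = (j+1).choose (s+1) * (s+1) :=
      Nat.add_one_mul_choose_eq j s
    calc 2*(s+1) * ((m+1).choose (2*(j+1)) * (j+1).choose (s+1))
        = ((j+1).choose (s+1) * (s+1)) * (2 * (m+1).choose (2*(j+1))) := by ring
      _ = ((j+1) * j.choose s) * (2 * (m+1).choose (2*(j+1))) := by rw [h2]
      _ = ((m+1).choose (2*(j+1)) * (2*j+2)) * j.choose s := by ring
      _ = ((m+1) * m.choose (2*j+1)) * j.choose s := by rw [h1]
      _ = (m+1) * (m.choose (2*j+1) * j.choose s) := by ring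
  rw [Finset.sum_congr rfl (fun j _ => e1 j), ← Finset.mul_sum]
  simp [Nat.choose_eq_zero_of_lt (Nat.succ_pos s)]

lemma lemF (n : ℕ) : Tsum (n+2) 0 = 2 * Tsum (n+1) 0 := by
  have e : n+1+1 = n+2 := rfl
  have h1 := lemA (n+1) 0
  rw [e] at h1
  have h2 := lemC n
  have h3 := lemA n 0
  omega

lemma lemH (n s : ℕ) : Tsum (n+2) (s+1) = 2 * Tsum (n+1) (s+1) + Tsum n s := by
  have e : n+1+1 = n+2 := rfl
  have h1 := lemA (n+1) (s+1)
  rw [e] at h1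
  have h2 := lemB n s
  have h3 := lemA n (s+1)
  omega

lemma coeffA_eq' (a b : ℕ) :
    ((-4 : ℝ) ^ b / 2 ^ a) * ∑ k ∈ Finset.range (a + 2), ((a + 1).choose (2 * k) * k.choose b : ℝ)
      = ((-4:ℝ)^b / 2^a) * ((Ssum (a+1) b : ℕ) : ℝ) := by
  unfold Ssum
  push_cast
  ring

/-- For `r ≥ 3` and `t ≥ 1`:
`(t/(r+1))·a_{r,t} = (t/r)·a_{r−1,t} − ((t−1)/(r−1))·a_{r−2,t−1}`. -/
theorem coeffA_three_term (r t : ℕ) (hr : 3 ≤ r) (ht : 1 ≤ t) :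
    (t / (r + 1) : ℝ) * coeffA r t =
      (t / r : ℝ) * coeffA (r - 1) t -
        ((t - 1 : ℕ) / (r - 1 : ℕ) : ℝ) * coeffA (r - 2) (t - 1) := by
  obtain ⟨m, rfl⟩ : ∃ m, r = m + 3 := ⟨r - 3, by omega⟩
  obtain ⟨s, rfl⟩ : ∃ s, t = s + 1 := ⟨t - 1, by omega⟩
  rw [show m+3-1 = m+2 from rfl, show m+3-2 = m+1 from rfl, show s+1-1 = s from rfl]
  unfold coeffA
  rw [coeffA_eq' (m+3) (s+1), coeffA_eq' (m+2) (s+1), coeffA_eq' (m+1) s,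
    show m+3+1 = m+4 from rfl, show m+2+1 = m+3 from rfl, show m+1+1 = m+2 from rfl]
  have hm2 : (m:ℝ)+2 ≠ 0 := by positivity
  have hm3 : (m:ℝ)+3 ≠ 0 := by positivity
  have hm4 : (m:ℝ)+4 ≠ 0 := by positivity
  rcases s with _ | u
  · -- t = 1
    have hF : Tsum (m+3) 0 = 2 * Tsum (m+2) 0 := by
      have := lemF (m+1)
      rwa [show m+1+2 = m+3 from rfl, show m+1+1 = m+2 from rfl] at this
    have hE1 : 2 * 1 * Ssum (m+4) 1 = (m+4) * Tsum (m+3) 0 := by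
      have := lemE (m+3) 0
      rwa [show m+3+1 = m+4 from rfl] at this
    have hE2 : 2 * 1 * Ssum (m+3) 1 = (m+3) * Tsum (m+2) 0 := by
      have := lemE (m+2) 0
      rwa [show m+2+1 = m+3 from rfl] at this
    rw [hF] at hE1
    have h1 : (Ssum (m+4) 1 : ℝ) = (m+4) * (Tsum (m+2) 0 : ℕ) := by
      have := congrArg (Nat.cast : ℕ → ℝ) hE1
      push_cast at this
      linarith
    have h2 : (Ssum (m+3) 1 : ℝ) = (m+3) * (Tsum (m+2) 0 : ℕ) / 2 := by
      have := congrArg (Nat.cast : ℕ → ℝ) hE2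
      push_cast at this
      linarith
    rw [h1, h2]
    push_cast
    field_simp
    ring
  · -- t = u + 2
    have hH : (Tsum (m+3) (u+1) : ℝ)
        = 2 * (Tsum (m+2) (u+1) : ℕ) + (Tsum (m+1) u : ℕ) := by
      have := lemH (m+1) u
      rw [show m+1+2 = m+3 from rfl, show m+1+1 = m+2 from rfl] at this
      exact_mod_cast this
    have key : ∀ a s : ℕ, (Ssum (a+1) (s+1) : ℝ) = (a+1) * (Tsum a s : ℕ) / (2*(s+1)) := by
      intro a s
      have := congrArg (Nat.cast : ℕ → ℝ) (lemE a s)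
      push_cast at this
      have hs : (s:ℝ)+1 ≠ 0 := by positivity
      field_simp
      linarith
    have h1 : (Ssum (m+4) (u+1+1) : ℝ) = (m+4) * (Tsum (m+3) (u+1) : ℕ) / (2*(u+2)) := by
      have := key (m+3) (u+1)
      rw [show m+3+1 = m+4 from rfl] at this
      push_cast at this
      linear_combination this
    have h2 : (Ssum (m+3) (u+1+1) : ℝ) = (m+3) * (Tsum (m+2) (u+1) : ℕ) / (2*(u+2)) := by
      have := key (m+2) (u+1)
      rw [show m+2+1 = m+3 from rfl] at this
      push_cast at this
      linear_combination this
    have h3 : (Ssum (m+2) (u+1) : ℝ) = (m+2) * (Tsum (m+1) u : ℕ) / (2*(u+1)) := by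
      have := key (m+1) u
      rw [show m+1+1 = m+2 from rfl] at this
      push_cast at this
      linear_combination this
    rw [h1, h2, h3, hH]
    have hu1 : (u:ℝ)+1 ≠ 0 := by positivity
    have hu2 : (u:ℝ)+2 ≠ 0 := by positivity
    push_cast
    field_simp
    ring
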